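/- Consider a greedy allocation process over finitely many rounds in which, at each round, each unallocated item proposes to an agent maximizing its current preference extent, where an agent's preference extent for any item is a value that never increases as the agent receives more items (monotone decreasing in the agent's allocated set). Then the resulting final matching is stable: no unallocated-item/agent pair (b,k) satisfies PE_b^k > PE_b^{μ(b)} at termination. -/
import Mathlib


/-- Greedy online allocation over `n` rounds: at each round each unallocated item `b` is given to
an agent maximizing its current preference extent, where preference extents `PE b k S` depend only
on the set `S` of items currently allocated to agent `k` and are monotone nonincreasing in `S`,
and the preference extent of the agent that receives an item for that item stays unchanged
afterwards. Then the final matching is stable. -/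
theorem greedy_allocation_stable {B K : Type*} [Fintype B] [DecidableEq B] [DecidableEq K]
    (PE : B → K → Finset B → ℝ)
    (hmono : ∀ (b : B) (k : K) (S S' : Finset B), S ⊆ S' → PE b k S' ≤ PE b k S)
    (μ : B → K)                     -- final matching: each item allocated to exactly one agent
    (t : B → ℕ)                     -- the round at which each item was allocated
    (S : ℕ → K → Finset B)          -- the set of items allocated to each agent before each round
    (hS : ∀ (τ : ℕ) (k : K), S τ k = Finset.univ.filter fun b => μ b = k ∧ t b < τ)
    (hgreedy : ∀ (b : B) (k : K), PE b k (S (t b) k) ≤ PE b (μ b) (S (t b) (μ b)))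
    (hfixed : ∀ (b : B) (τ : ℕ), t b < τ → PE b (μ b) (S τ (μ b)) = PE b (μ b) (S (t b) (μ b)))
    (Sfin : K → Finset B) (hSfin : ∀ k, Sfin k = Finset.univ.filter fun b => μ b = k) :
    ¬ ∃ (b : B) (k : K), PE b (μ b) (Sfin (μ b)) < PE b k (Sfin k) := by
  rintro ⟨b, k, hlt⟩
  set T : ℕ := (Finset.univ.sup t) + 1 with hT
  have hball : ∀ b' : B, t b' < T := fun b' =>
    Nat.lt_succ_of_le (Finset.le_sup (Finset.mem_univ b'))
  have hST : ∀ k', S T k' = Sfin k' := by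
    intro k'
    rw [hS, hSfin]
    apply Finset.filter_congr
    intro x _
    simp [hball x]
  have hsub : S (t b) k ⊆ Sfin k := by
    rw [hS, hSfin]
    intro x hx
    simp only [Finset.mem_filter] at hx ⊢
    exact ⟨hx.1, hx.2.1⟩
  have h1 : PE b (μ b) (Sfin (μ b)) = PE b (μ b) (S (t b) (μ b)) := by
    rw [← hST (μ b)]
    exact hfixed b T (hball b)
  have h2 : PE b k (Sfin k) ≤ PE b k (S (t b) k) := hmono b k _ _ hsub
  have h3 := hgreedy b k
  linarith
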